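/- If f : A → A has at least two distinct fixed points, then there exists a lattice structure (A, ∨, ∧) on A such that f is a lattice endomorphism: f(x ∨ y) = f(x) ∨ f(y) and f(x ∧ y) = f(x) ∧ f(y) for all x, y ∈ A. -/

import Mathlib

/-!
Call `x` and `y` equivalent when `f^[n] x = f^[n] y` for some `n`. Fix a linear order on `A` in
which `p` is least and `q` greatest, and order each class by comparing `f^[n] x` and `f^[n] y` at
the last step `n` before the two orbits merge; on each class this is a linear order that `f`
preserves or collapses. In the class of the fixed point `p`, `p` is then the least element, and in
the class of `q`, `q` is the greatest. Stack the class of `q` at the bottom and the class of `p` at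
the top, and leave all other classes mutually incomparable in between. Any two incomparable
elements then have join `p` and meet `q`, and `f` is monotone, keeps incomparable pairs
incomparable and fixes `p` and `q`, so it preserves joins and meets.
-/

open Function

section IncompRel

variable {α : Type*}

theorem exists_isLUB_pair_of_incompRel [PartialOrder α] {s : α}
    (hs : ∀ x y, IncompRel (· ≤ ·) x y → IsLUB {x, y} s) (x y : α) :
    ∃ z, IsLUB {x, y} z := by
  by_cases hxy : x ≤ y
  · exact ⟨y, IsGreatest.isLUB ⟨by simp, by simp [upperBounds, hxy]⟩⟩
  by_cases hyx : y ≤ x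
  · exact ⟨x, IsGreatest.isLUB ⟨by simp, by simp [upperBounds, hyx]⟩⟩
  exact ⟨s, hs x y ⟨hxy, hyx⟩⟩

theorem exists_isGLB_pair_of_incompRel [PartialOrder α] {i : α}
    (hi : ∀ x y, IncompRel (· ≤ ·) x y → IsGLB {x, y} i) (x y : α) :
    ∃ z, IsGLB {x, y} z :=
  exists_isLUB_pair_of_incompRel (α := αᵒᵈ) (fun x y h => hi x y h.symm) x y

noncomputable abbrev Lattice.ofIncompRel [PartialOrder α] (s i : α)
    (hs : ∀ x y, IncompRel (· ≤ ·) x y → IsLUB {x, y} s)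
    (hi : ∀ x y, IncompRel (· ≤ ·) x y → IsGLB {x, y} i) : Lattice α :=
  Lattice.ofIsLUBofIsGLB (fun x y => (exists_isLUB_pair_of_incompRel hs x y).choose)
    (fun x y => (exists_isGLB_pair_of_incompRel hi x y).choose)
    (fun x y => (exists_isLUB_pair_of_incompRel hs x y).choose_spec)
    (fun x y => (exists_isGLB_pair_of_incompRel hi x y).choose_spec)

variable [Lattice α] {f : α → α}

theorem map_sup_of_incompRel {s : α} (hs : ∀ x y, IncompRel (· ≤ ·) x y → IsLUB {x, y} s)
    (hfs : IsFixedPt f s) (hf : Monotone f)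
    (hinc : ∀ x y, IncompRel (· ≤ ·) x y → IncompRel (· ≤ ·) (f x) (f y)) (x y : α) :
    f (x ⊔ y) = f x ⊔ f y := by
  by_cases hxy : x ≤ y
  · rw [sup_of_le_right hxy, sup_of_le_right (hf hxy)]
  by_cases hyx : y ≤ x
  · rw [sup_of_le_left hyx, sup_of_le_left (hf hyx)]
  have h : IncompRel (· ≤ ·) x y := ⟨hxy, hyx⟩
  rw [isLUB_pair.unique (hs x y h), isLUB_pair.unique (hs _ _ (hinc x y h)), hfs]

theorem map_inf_of_incompRel {i : α} (hi : ∀ x y, IncompRel (· ≤ ·) x y → IsGLB {x, y} i)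
    (hfi : IsFixedPt f i) (hf : Monotone f)
    (hinc : ∀ x y, IncompRel (· ≤ ·) x y → IncompRel (· ≤ ·) (f x) (f y)) (x y : α) :
    f (x ⊓ y) = f x ⊓ f y :=
  map_sup_of_incompRel (α := αᵒᵈ) (fun x y h => hi x y h.symm) hfi hf.dual
    (fun x y h => (hinc x y h.symm).symm) x y

end IncompRel

theorem exists_linearOrder_isBot_isTop {α : Type*} {p q : α} (hpq : p ≠ q) :
    ∃ _ : LinearOrder α, IsBot p ∧ IsTop q := by
  classical
  let := IsWellOrder.linearOrder (WellOrderingRel (α := α))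
  let key : α → ℕ ×ₗ α := fun a => toLex (if a = p then 0 else if a = q then 2 else 1, a)
  refine ⟨LinearOrder.lift' key fun a b h => congrArg (fun k => (ofLex k).2) h,
    fun a => ?_, fun a => ?_⟩
  all_goals
    change key _ ≤ key _
    simp only [key, Prod.Lex.le_iff]
    split_ifs <;> simp_all

namespace Function

variable {α : Type*} {f : α → α} {x y z b t : α}

def IterateEq (f : α → α) (x y : α) : Prop := ∃ n, f^[n] x = f^[n] y

theorem iterate_eq_of_le {m n : ℕ} (h : f^[m] x = f^[m] y) (hmn : m ≤ n) :
    f^[n] x = f^[n] y := by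
  obtain ⟨k, rfl⟩ := Nat.exists_eq_add_of_le' hmn
  rw [iterate_add_apply, iterate_add_apply, h]

namespace IterateEq

@[refl]
theorem refl (x : α) : IterateEq f x x := ⟨0, rfl⟩

theorem symm : IterateEq f x y → IterateEq f y x
  | ⟨n, h⟩ => ⟨n, h.symm⟩

theorem trans : IterateEq f x y → IterateEq f y z → IterateEq f x z
  | ⟨m, hm⟩, ⟨n, hn⟩ =>
    ⟨max m n, (iterate_eq_of_le hm (le_max_left m n)).trans
      (iterate_eq_of_le hn (le_max_right m n))⟩

end IterateEq

theorem iterateEq_apply_iff : IterateEq f (f x) (f y) ↔ IterateEq f x y := by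
  refine ⟨fun ⟨n, h⟩ => ⟨n + 1, by rwa [iterate_succ_apply, iterate_succ_apply]⟩,
    fun ⟨n, h⟩ => ⟨n, ?_⟩⟩
  rw [(Commute.iterate_self f n).eq, (Commute.iterate_self f n).eq, h]

theorem IsFixedPt.not_iterateEq (hx : IsFixedPt f x) (hy : IsFixedPt f y) (hne : x ≠ y) :
    ¬ IterateEq f x y := fun ⟨n, h⟩ => hne (by rwa [(hx.iterate n).eq, (hy.iterate n).eq] at h)

/- The order below puts `b` least in its class and `t` greatest in its class when `b` is a bottom
and `t` a top fixed point; hence the class of `t` gets the lowest rank and that of `b` the highest. -/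
variable (f b t) in
open scoped Classical in
noncomputable def mergeRank (x : α) : ℕ :=
  if IterateEq f x t then 0 else if IterateEq f x b then 2 else 1

theorem mergeRank_congr (h : IterateEq f x y) : mergeRank f b t x = mergeRank f b t y := by
  have ht : IterateEq f x t ↔ IterateEq f y t := ⟨h.symm.trans, h.trans⟩
  have hb : IterateEq f x b ↔ IterateEq f y b := ⟨h.symm.trans, h.trans⟩
  classical
  simp only [mergeRank, ht, hb]

theorem mergeRank_apply (hfb : IsFixedPt f b) (hft : IsFixedPt f t) (x : α) :
    mergeRank f b t (f x) = mergeRank f b t x := by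
  classical
  conv_lhs => rw [mergeRank, ← hfb.eq, ← hft.eq]
  simp only [iterateEq_apply_iff, mergeRank]

theorem iterateEq_of_mergeRank_eq_zero (h : mergeRank f b t x = 0) : IterateEq f x t := by
  unfold mergeRank at h
  split_ifs at h
  assumption

theorem iterateEq_of_mergeRank_eq_two (h : mergeRank f b t x = 2) : IterateEq f x b := by
  unfold mergeRank at h
  split_ifs at h <;> first | assumption | omega

theorem mergeRank_le_two (x : α) : mergeRank f b t x ≤ 2 := by
  unfold mergeRank
  split_ifs <;> omega

theorem mergeRank_eq_one (h : mergeRank f b t x = mergeRank f b t y) (hxy : ¬ IterateEq f x y) :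
    mergeRank f b t x = 1 := by
  have h0 : mergeRank f b t x ≠ 0 := fun h0 => hxy <|
    (iterateEq_of_mergeRank_eq_zero h0).trans (iterateEq_of_mergeRank_eq_zero (h ▸ h0)).symm
  have h2 : mergeRank f b t x ≠ 2 := fun h2 => hxy <|
    (iterateEq_of_mergeRank_eq_two h2).trans (iterateEq_of_mergeRank_eq_two (h ▸ h2)).symm
  have := mergeRank_le_two (f := f) (b := b) (t := t) x
  omega

theorem mergeRank_left_eq_two (hbt : ¬ IterateEq f b t) : mergeRank f b t b = 2 := by
  classical
  simp [mergeRank, hbt, IterateEq.refl]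

theorem mergeRank_right_eq_zero : mergeRank f b t t = 0 := by
  classical
  simp [mergeRank, IterateEq.refl]

section LinearOrder

variable [LinearOrder α]

def MergeLT (f : α → α) (x y : α) : Prop :=
  ∃ n, f^[n + 1] x = f^[n + 1] y ∧ f^[n] x < f^[n] y

namespace MergeLT

theorem iterateEq : MergeLT f x y → IterateEq f x y
  | ⟨n, h, _⟩ => ⟨n + 1, h⟩

theorem asymm : MergeLT f x y → ¬ MergeLT f y x
  | ⟨m, hm, hlt⟩, ⟨n, hn, hgt⟩ => by
    rcases lt_trichotomy m n with hmn | rfl | hnm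
    · exact hgt.ne' (iterate_eq_of_le hm hmn)
    · exact hlt.asymm hgt
    · exact hlt.ne' (iterate_eq_of_le hn hnm)

theorem trans : MergeLT f x y → MergeLT f y z → MergeLT f x z
  | ⟨m, hm, hxy⟩, ⟨n, hn, hyz⟩ => by
    rcases lt_trichotomy m n with hmn | rfl | hnm
    · exact ⟨n, (iterate_eq_of_le hm (by omega)).trans hn,
        (iterate_eq_of_le hm hmn).trans_lt hyz⟩
    · exact ⟨m, hm.trans hn, hxy.trans hyz⟩
    · exact ⟨m, hm.trans (iterate_eq_of_le hn (by omega)),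
        hxy.trans_eq (iterate_eq_of_le hn hnm)⟩

theorem apply : MergeLT f x y → f x = f y ∨ MergeLT f (f x) (f y)
  | ⟨0, h, _⟩ => .inl h
  | ⟨n + 1, h, hlt⟩ => .inr ⟨n, by rwa [← iterate_succ_apply, ← iterate_succ_apply],
    by rwa [← iterate_succ_apply, ← iterate_succ_apply]⟩

end MergeLT

theorem IterateEq.eq_or_mergeLT_or_mergeLT :
    IterateEq f x y → x = y ∨ MergeLT f x y ∨ MergeLT f y x := by
  rintro ⟨n, h⟩
  induction n with
  | zero => exact .inl h
  | succ n ih =>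
    by_cases hn : f^[n] x = f^[n] y
    · exact ih hn
    rcases lt_or_gt_of_ne hn with hlt | hgt
    · exact .inr (.inl ⟨n, h, hlt⟩)
    · exact .inr (.inr ⟨n, h.symm, hgt⟩)

theorem IterateEq.eq_or_mergeLT_of_isBot (h : IterateEq f x b) (hb : IsBot b)
    (hfb : IsFixedPt f b) : b = x ∨ MergeLT f b x := by
  rcases h.eq_or_mergeLT_or_mergeLT with rfl | ⟨n, -, hlt⟩ | hbx
  · exact .inl rfl
  · exact absurd (hlt.trans_eq (hfb.iterate n)) (hb _).not_gt
  · exact .inr hbx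

theorem IterateEq.eq_or_mergeLT_of_isTop (h : IterateEq f x t) (ht : IsTop t)
    (hft : IsFixedPt f t) : x = t ∨ MergeLT f x t := by
  rcases h.eq_or_mergeLT_or_mergeLT with rfl | hxt | ⟨n, -, hlt⟩
  · exact .inl rfl
  · exact .inr hxt
  · exact absurd ((hft.iterate n).symm.trans_lt hlt) (ht _).not_gt

variable (f b t) in
def MergeLE (x y : α) : Prop :=
  x = y ∨ mergeRank f b t x < mergeRank f b t y ∨ MergeLT f x y

namespace MergeLE

theorem mergeRank_le : MergeLE f b t x y → mergeRank f b t x ≤ mergeRank f b t y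
  | .inl rfl => le_rfl
  | .inr (.inl h) => h.le
  | .inr (.inr h) => (mergeRank_congr h.iterateEq).le

theorem iterateEq_of_mergeRank_le (h : MergeLE f b t x y)
    (hyx : mergeRank f b t y ≤ mergeRank f b t x) : IterateEq f x y := by
  rcases h with rfl | h | h
  · rfl
  · omega
  · exact h.iterateEq

theorem trans (hxy : MergeLE f b t x y) (hyz : MergeLE f b t y z) : MergeLE f b t x z := by
  rcases hxy with rfl | hxy | hxy
  · exact hyz
  · exact .inr (.inl (hxy.trans_le hyz.mergeRank_le))
  rcases hyz with rfl | hyz | hyz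
  · exact .inr (.inr hxy)
  · exact .inr (.inl ((mergeRank_congr hxy.iterateEq).trans_lt hyz))
  · exact .inr (.inr (hxy.trans hyz))

theorem antisymm (hxy : MergeLE f b t x y) (hyx : MergeLE f b t y x) : x = y := by
  have hr := le_antisymm hxy.mergeRank_le hyx.mergeRank_le
  rcases hxy with rfl | hxy | hxy
  · rfl
  · omega
  rcases hyx with rfl | hyx | hyx
  · rfl
  · omega
  · exact absurd hyx hxy.asymm

theorem apply (hfb : IsFixedPt f b) (hft : IsFixedPt f t) :
    MergeLE f b t x y → MergeLE f b t (f x) (f y)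
  | .inl rfl => .inl rfl
  | .inr (.inl h) => .inr (.inl (by rwa [mergeRank_apply hfb hft, mergeRank_apply hfb hft]))
  | .inr (.inr h) => h.apply.imp id .inr

end MergeLE

variable (f b t) in
abbrev mergePartialOrder : PartialOrder α where
  le := MergeLE f b t
  lt x y := MergeLE f b t x y ∧ ¬ MergeLE f b t y x
  lt_iff_le_not_ge _ _ := .rfl
  le_refl _ := .inl rfl
  le_trans _ _ _ := MergeLE.trans
  le_antisymm _ _ := MergeLE.antisymm

theorem incompRel_mergeLE_iff : IncompRel (MergeLE f b t) x y ↔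
    mergeRank f b t x = mergeRank f b t y ∧ ¬ IterateEq f x y := by
  constructor
  · rintro ⟨hxy, hyx⟩
    refine ⟨?_, fun h => ?_⟩
    · by_contra hne
      rcases lt_or_gt_of_ne hne with hlt | hgt
      exacts [hxy (.inr (.inl hlt)), hyx (.inr (.inl hgt))]
    · rcases h.eq_or_mergeLT_or_mergeLT with rfl | h | h
      exacts [hxy (.inl rfl), hxy (.inr (.inr h)), hyx (.inr (.inr h))]
  · rintro ⟨hr, hxy⟩
    exact ⟨fun h => hxy (h.iterateEq_of_mergeRank_le hr.ge),
      fun h => hxy (h.iterateEq_of_mergeRank_le hr.le).symm⟩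

theorem incompRel_mergeLE_apply (hfb : IsFixedPt f b) (hft : IsFixedPt f t)
    (h : IncompRel (MergeLE f b t) x y) : IncompRel (MergeLE f b t) (f x) (f y) := by
  rw [incompRel_mergeLE_iff, mergeRank_apply hfb hft, mergeRank_apply hfb hft,
    iterateEq_apply_iff]
  exact incompRel_mergeLE_iff.1 h

theorem isLUB_of_incompRel_mergeLE (hb : IsBot b) (hfb : IsFixedPt f b)
    (hbt : ¬ IterateEq f b t) (h : IncompRel (MergeLE f b t) x y) :
    @IsLUB α (mergePartialOrder f b t).toLE {x, y} b := by
  obtain ⟨hr, hxy⟩ := incompRel_mergeLE_iff.1 h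
  have hx := mergeRank_eq_one hr hxy
  have hb2 := mergeRank_left_eq_two hbt
  refine ⟨?_, fun z hz => ?_⟩
  · rintro _ (rfl | rfl)
    exacts [.inr (.inl (by omega)), .inr (.inl (by omega))]
  have hxz : MergeLE f b t x z := hz (Set.mem_insert _ _)
  have hyz : MergeLE f b t y z := hz (Set.mem_insert_of_mem _ rfl)
  have hz : mergeRank f b t z = 2 := by
    by_contra hz
    have := hxz.mergeRank_le
    have := mergeRank_le_two (f := f) (b := b) (t := t) z
    exact hxy <| (hxz.iterateEq_of_mergeRank_le (by omega)).trans
      (hyz.iterateEq_of_mergeRank_le (by omega)).symm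
  rcases (iterateEq_of_mergeRank_eq_two hz).eq_or_mergeLT_of_isBot hb hfb with rfl | hbz
  exacts [.inl rfl, .inr (.inr hbz)]

theorem isGLB_of_incompRel_mergeLE (ht : IsTop t) (hft : IsFixedPt f t)
    (h : IncompRel (MergeLE f b t) x y) :
    @IsGLB α (mergePartialOrder f b t).toLE {x, y} t := by
  obtain ⟨hr, hxy⟩ := incompRel_mergeLE_iff.1 h
  have hx := mergeRank_eq_one hr hxy
  have ht0 := mergeRank_right_eq_zero (f := f) (b := b) (t := t)
  refine ⟨?_, fun z hz => ?_⟩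
  · rintro _ (rfl | rfl)
    exacts [.inr (.inl (by omega)), .inr (.inl (by omega))]
  have hzx : MergeLE f b t z x := hz (Set.mem_insert _ _)
  have hzy : MergeLE f b t z y := hz (Set.mem_insert_of_mem _ rfl)
  have hz : mergeRank f b t z = 0 := by
    by_contra hz
    have := hzx.mergeRank_le
    exact hxy <| (hzx.iterateEq_of_mergeRank_le (by omega)).symm.trans
      (hzy.iterateEq_of_mergeRank_le (by omega))
  rcases (iterateEq_of_mergeRank_eq_zero hz).eq_or_mergeLT_of_isTop ht hft with rfl | hzt
  exacts [.inl rfl, .inr (.inr hzt)]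

variable (f) in
noncomputable abbrev mergeLattice (hb : IsBot b) (ht : IsTop t) (hfb : IsFixedPt f b)
    (hft : IsFixedPt f t) (hbt : b ≠ t) : Lattice α :=
  @Lattice.ofIncompRel α (mergePartialOrder f b t) b t
    (fun _ _ => isLUB_of_incompRel_mergeLE hb hfb (hfb.not_iterateEq hft hbt))
    (fun _ _ => isGLB_of_incompRel_mergeLE ht hft)

theorem mergeLattice_map_sup (hb : IsBot b) (ht : IsTop t) (hfb : IsFixedPt f b)
    (hft : IsFixedPt f t) (hbt : b ≠ t) (x y : α) :
    f ((mergeLattice f hb ht hfb hft hbt).sup x y) =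
      (mergeLattice f hb ht hfb hft hbt).sup (f x) (f y) :=
  @map_sup_of_incompRel α (mergeLattice f hb ht hfb hft hbt) f b
    (fun _ _ => isLUB_of_incompRel_mergeLE hb hfb (hfb.not_iterateEq hft hbt)) hfb
    (fun _ _ => MergeLE.apply hfb hft) (fun _ _ => incompRel_mergeLE_apply hfb hft) x y

theorem mergeLattice_map_inf (hb : IsBot b) (ht : IsTop t) (hfb : IsFixedPt f b)
    (hft : IsFixedPt f t) (hbt : b ≠ t) (x y : α) :
    f ((mergeLattice f hb ht hfb hft hbt).inf x y) =
      (mergeLattice f hb ht hfb hft hbt).inf (f x) (f y) :=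
  @map_inf_of_incompRel α (mergeLattice f hb ht hfb hft hbt) f t
    (fun _ _ => isGLB_of_incompRel_mergeLE ht hft) hft
    (fun _ _ => MergeLE.apply hfb hft) (fun _ _ => incompRel_mergeLE_apply hfb hft) x y

end LinearOrder

end Function

theorem stmt15 {A : Type*} (f : A → A) (p q : A)
    (hpq : p ≠ q) (hp : f p = p) (hq : f q = q) :
    ∃ L : Lattice A,
      (∀ x y : A, f (L.sup x y) = L.sup (f x) (f y)) ∧
      (∀ x y : A, f (L.inf x y) = L.inf (f x) (f y)) := by
  obtain ⟨_, hpb, hqt⟩ := exists_linearOrder_isBot_isTop hpq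
  exact ⟨mergeLattice f hpb hqt hp hq hpq, mergeLattice_map_sup hpb hqt hp hq hpq,
    mergeLattice_map_inf hpb hqt hp hq hpq⟩
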